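/- arXiv:1908.06897 — 4 statements merged into one kernel-verified Lean document; each statement's English description precedes it below -/
import Mathlib

section
/- Let P, Q be finite posets, ξ : P → Q an order homomorphism, and let c_0, ..., c_I ∈ G(ξ) (I ≥ 1) be such that c_{i-1} ≼_0 c_i for each i, where a ≼_0 b means there exist a' ∈ a, b' ∈ b with a' ≤_P b'. Then ξ(c_0) ≤_Q ξ(c_I) (ξ being constant on each class), and if ξ(c_0) = ξ(c_I) then c_0 = c_1 = ... = c_I. -/
/-- Zigzag connectivity within a subset `A`. -/
def ZigConn {α : Type*} [PartialOrder α] (A : Set α) (x y : α) : Prop :=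
  Relation.ReflTransGen (fun a b => a ∈ A ∧ b ∈ A ∧ (a < b ∨ b < a)) x y

/-- The zigzag-connectivity component of `x` inside the pre-image `ξ⁻¹(ξ(x))`. -/
def Gxi {P Q : Type*} [PartialOrder P] (ξ : P → Q) (x : P) : Set P :=
  {y | ZigConn (ξ ⁻¹' {ξ x}) x y}

/-!
Along the chain `c₀ ≼₀ c₁ ≼₀ ⋯ ≼₀ c_I` each step `a ≤ b` with `a ∈ c_{i-1}`, `b ∈ c_i` gives
`ξ(c_{i-1}) = ξ a ≤ ξ b = ξ(c_i)`, so the values of `ξ` on the classes increase. If the ends have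
the same value, every class has it, so each step `a ≤ b` stays inside one fibre of `ξ` and is a
single zigzag edge: consecutive classes are the same component.
-/

namespace ZigConn

variable {α : Type*} [PartialOrder α] {A : Set α}

theorem symm {x y : α} (h : ZigConn A x y) : ZigConn A y x := by
  induction h with
  | refl => exact .refl
  | tail _ hstep ih => exact .head ⟨hstep.2.1, hstep.1, hstep.2.2.symm⟩ ih

theorem trans {x y z : α} (hxy : ZigConn A x y) (hyz : ZigConn A y z) : ZigConn A x z :=
  Relation.ReflTransGen.trans hxy hyz

end ZigConn

namespace Gxi

variable {P Q : Type*} [PartialOrder P] (ξ : P → Q) {x y : P}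

theorem apply_eq_of_mem (h : y ∈ Gxi ξ x) : ξ y = ξ x := by
  induction h with
  | refl => rfl
  | tail _ hstep _ => exact hstep.2.1

theorem eq_of_mem (h : y ∈ Gxi ξ x) : Gxi ξ y = Gxi ξ x := by
  ext z
  simp only [Gxi, Set.mem_ofPred_eq, apply_eq_of_mem ξ h]
  exact ⟨h.trans, h.symm.trans⟩

theorem eq_of_le_of_apply_eq (hxy : x ≤ y) (hξ : ξ x = ξ y) : Gxi ξ y = Gxi ξ x := by
  apply eq_of_mem
  rcases hxy.lt_or_eq with hlt | rfl
  · exact Relation.ReflTransGen.single ⟨rfl, hξ.symm, Or.inl hlt⟩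
  · exact Relation.ReflTransGen.refl

end Gxi

section Chain

variable {P Q : Type*} [PartialOrder P] {ξ : P → Q} {I : ℕ} {c : ℕ → Set P}

theorem eq_Gxi_of_mem_of_forall_eq_Gxi (hc : ∀ i ≤ I, ∃ x : P, c i = Gxi ξ x)
    {i : ℕ} (hi : i ≤ I) {a : P} (ha : a ∈ c i) : c i = Gxi ξ a := by
  obtain ⟨x, hx⟩ := hc i hi
  rw [hx] at ha ⊢
  exact (Gxi.eq_of_mem ξ ha).symm

theorem apply_eq_of_mem_of_forall_eq_Gxi (hc : ∀ i ≤ I, ∃ x : P, c i = Gxi ξ x)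
    {i : ℕ} (hi : i ≤ I) {a b : P} (ha : a ∈ c i) (hb : b ∈ c i) : ξ a = ξ b := by
  rw [eq_Gxi_of_mem_of_forall_eq_Gxi hc hi ha] at hb
  exact (Gxi.apply_eq_of_mem ξ hb).symm

theorem apply_le_of_chain [Preorder Q] (hmono : Monotone ξ)
    (hc : ∀ i ≤ I, ∃ x : P, c i = Gxi ξ x)
    (hprec : ∀ i, 1 ≤ i → i ≤ I → ∃ a ∈ c (i - 1), ∃ b ∈ c i, a ≤ b)
    {i j : ℕ} (hij : i ≤ j) (hj : j ≤ I) {a b : P} (ha : a ∈ c i) (hb : b ∈ c j) :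
    ξ a ≤ ξ b := by
  induction j, hij using Nat.le_induction generalizing b with
  | base => exact (apply_eq_of_mem_of_forall_eq_Gxi hc hj ha hb).le
  | succ k hik ih =>
    obtain ⟨a', ha', b', hb', hab⟩ := hprec (k + 1) (by omega) hj
    rw [Nat.add_sub_cancel] at ha'
    calc ξ a ≤ ξ a' := ih (by omega) ha'
      _ ≤ ξ b' := hmono hab
      _ = ξ b := apply_eq_of_mem_of_forall_eq_Gxi hc hj hb' hb

theorem chain_succ_eq_of_apply_const (hc : ∀ i ≤ I, ∃ x : P, c i = Gxi ξ x)
    (hprec : ∀ i, 1 ≤ i → i ≤ I → ∃ a ∈ c (i - 1), ∃ b ∈ c i, a ≤ b)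
    {q : Q} (hconst : ∀ j ≤ I, ∀ b ∈ c j, ξ b = q) {k : ℕ} (hk : k + 1 ≤ I) :
    c (k + 1) = c k := by
  obtain ⟨a, ha, b, hb, hab⟩ := hprec (k + 1) (by omega) hk
  rw [Nat.add_sub_cancel] at ha
  rw [eq_Gxi_of_mem_of_forall_eq_Gxi hc hk hb, eq_Gxi_of_mem_of_forall_eq_Gxi hc (by omega) ha]
  exact Gxi.eq_of_le_of_apply_eq ξ hab
    ((hconst k (by omega) a ha).trans (hconst (k + 1) hk b hb).symm)

end Chain

theorem stmt_8_general {P Q : Type} [PartialOrder P] [PartialOrder Q]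
    (ξ : P → Q) (hmono : Monotone ξ)
    (I : ℕ) (c : ℕ → Set P)
    (hc : ∀ i ≤ I, ∃ x : P, c i = Gxi ξ x)
    (hprec : ∀ i, 1 ≤ i → i ≤ I → ∃ a ∈ c (i - 1), ∃ b ∈ c i, a ≤ b)
    (x0 xI : P) (hx0 : x0 ∈ c 0) (hxI : xI ∈ c I) :
    ξ x0 ≤ ξ xI ∧ (ξ x0 = ξ xI → ∀ i ≤ I, c i = c 0) := by
  refine ⟨apply_le_of_chain hmono hc hprec I.zero_le le_rfl hx0 hxI, fun heq => ?_⟩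
  have hconst : ∀ j ≤ I, ∀ b ∈ c j, ξ b = ξ x0 := fun j hj b hb =>
    le_antisymm ((apply_le_of_chain hmono hc hprec hj le_rfl hb hxI).trans heq.ge)
      (apply_le_of_chain hmono hc hprec j.zero_le hj hx0 hb)
  intro i hi
  induction i with
  | zero => rfl
  | succ k ih => exact (chain_succ_eq_of_apply_const hc hprec hconst hi).trans (ih (by omega))

theorem stmt_8 {P Q : Type} [Fintype P] [PartialOrder P] [Fintype Q] [PartialOrder Q]
    (ξ : P → Q) (hmono : Monotone ξ)
    (I : ℕ) (hI : 1 ≤ I) (c : ℕ → Set P)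
    (hc : ∀ i ≤ I, ∃ x : P, c i = Gxi ξ x)
    (hprec : ∀ i, 1 ≤ i → i ≤ I → ∃ a ∈ c (i - 1), ∃ b ∈ c i, a ≤ b)
    (x0 xI : P) (hx0 : x0 ∈ c 0) (hxI : xI ∈ c I) :
    ξ x0 ≤ ξ xI ∧ (ξ x0 = ξ xI → ∀ i ≤ I, c i = c 0) :=
  stmt_8_general ξ hmono I c hc hprec x0 xI hx0 hxI
end

section
/- Let R, S be finite posets. If #S(P,R) = #S(P,S) for every finite poset P, then R and S are order isomorphic. (Conversely, isomorphic posets trivially satisfy this equality.) -/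
open Function Finset


noncomputable section
namespace Stmt12

/-- A copy of `Fin k` with no order instances. -/
def Wrap (k : ℕ) : Type := Fin k
instance (k : ℕ) : Fintype (Wrap k) := by unfold Wrap; infer_instance
instance (k : ℕ) : DecidableEq (Wrap k) := by unfold Wrap; infer_instance
instance (k : ℕ) : Finite (Wrap k) := by unfold Wrap; infer_instance

lemma card_wrap (k : ℕ) : Nat.card (Wrap k) = k := by
  rw [Nat.card_eq_fintype_card]; exact Fintype.card_fin k

def IsEmb {A B : Type} [LE A] [LE B] (f : A → B) : Prop := ∀ x y : A, x ≤ y ↔ f x ≤ f y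

def homc (P R : Type) [Preorder P] [Preorder R] : ℕ := Nat.card {f : P → R // StrictMono f}
def embc (A B : Type) [LE A] [LE B] : ℕ := Nat.card {f : A → B // IsEmb f}
def surjc (P A : Type) [Preorder P] [Preorder A] : ℕ :=
  Nat.card {f : P → A // StrictMono f ∧ Surjective f}
def relc (A : Type) [Preorder A] : ℕ := Nat.card {p : A × A // p.1 < p.2}
def meas (A : Type) [Preorder A] : ℕ := (Nat.card A)^3 + ((Nat.card A)^2 - relc A)

lemma IsEmb.injective {A B : Type} [PartialOrder A] [PartialOrder B] {f : A → B}
    (hf : IsEmb f) : Injective f := by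
  intro x y hxy
  exact le_antisymm ((hf x y).2 hxy.le) ((hf y x).2 hxy.ge)

lemma IsEmb.lt_iff {A B : Type} [PartialOrder A] [PartialOrder B] {f : A → B}
    (hf : IsEmb f) (x y : A) : x < y ↔ f x < f y := by
  simp only [lt_iff_le_not_ge, hf x y, hf y x]

lemma IsEmb.comp {A B C : Type} [LE A] [LE B] [LE C] {f : A → B} {g : B → C}
    (hg : IsEmb g) (hf : IsEmb f) : IsEmb (g ∘ f) := fun x y => (hf x y).trans (hg _ _)

/-- The set of partial orders on `Wrap k`. -/
abbrev POW (k : ℕ) := PartialOrder (Wrap k)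

instance (k : ℕ) : Finite (POW k) := by
  apply Finite.of_injective (fun p : POW k => (p.le : Wrap k → Wrap k → Prop))
  intro p q hh
  apply PartialOrder.ext
  intro x y
  exact iff_of_eq (congrFun (congrFun hh x) y)

noncomputable instance (k : ℕ) : Fintype (POW k) := Fintype.ofFinite _

def embc' (k : ℕ) (r : POW k) (B : Type) [LE B] : ℕ :=
  @embc (Wrap k) B r.toPreorder.toLE _
def surjc' (P : Type) [Preorder P] (k : ℕ) (r : POW k) : ℕ :=
  @surjc P (Wrap k) _ r.toPreorder
def meas' (k : ℕ) (r : POW k) : ℕ := @meas (Wrap k) r.toPreorder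
def relc' (k : ℕ) (r : POW k) : ℕ := @relc (Wrap k) r.toPreorder



variable {P R : Type} [Fintype P] [PartialOrder P] [Fintype R] [PartialOrder R]

local instance : DecidableEq R := Classical.decEq R

abbrev SurjSub (P : Type) [Preorder P] (T : Finset R) :=
  {g : P → ↥T // StrictMono g ∧ Surjective g}

lemma sigma_surjsub_ext {T T' : Finset R} (hTT : T = T')
    (g : SurjSub P T) (g' : SurjSub P T') (hg : ∀ p, (g.1 p : R) = (g'.1 p : R)) :
    (⟨T, g⟩ : Σ T : Finset R, SurjSub P T) = ⟨T', g'⟩ := by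
  subst hTT
  congr 1
  apply Subtype.ext
  funext p
  exact Subtype.ext (hg p)

def decompEquiv :
    {f : P → R // StrictMono f} ≃ Σ T : Finset R, SurjSub P T where
  toFun f := ⟨univ.image f.1,
    ⟨fun p => ⟨f.1 p, mem_image_of_mem _ (mem_univ p)⟩,
      fun p q hpq => Subtype.mk_lt_mk.2 (f.2 hpq),
      by rintro ⟨x, hx⟩
         obtain ⟨p, -, hp⟩ := mem_image.1 hx
         exact ⟨p, Subtype.ext hp⟩⟩⟩
  invFun x := ⟨fun p => (x.2.1 p : R), fun p q hpq => Subtype.coe_lt_coe.2 (x.2.2.1 hpq)⟩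
  left_inv f := by apply Subtype.ext; rfl
  right_inv := by
    rintro ⟨T, g⟩
    refine sigma_surjsub_ext ?_ _ _ (fun p => rfl)
    ext x
    simp only [mem_image, mem_univ, true_and]
    constructor
    · rintro ⟨p, hp⟩; exact hp ▸ (g.1 p).2
    · intro hx
      obtain ⟨p, hp⟩ := g.2.2 ⟨x, hx⟩
      exact ⟨p, congrArg Subtype.val hp⟩

lemma homc_eq_sum_surjc : homc P R = ∑ T : Finset R, surjc P ↥T := by
  have : ∀ T : Finset R, Fintype (SurjSub P T) := fun T => Fintype.ofFinite _
  rw [homc, Nat.card_congr (decompEquiv (P := P) (R := R)), Nat.card_eq_fintype_card,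
    Fintype.card_sigma]
  exact Finset.sum_congr rfl fun T _ => (Nat.card_eq_fintype_card).symm

section Group

variable {P R : Type} [Fintype P] [PartialOrder P] [Fintype R] [PartialOrder R] {k : ℕ}

abbrev EPair (P R : Type) [Preorder P] [PartialOrder R] (k : ℕ) (r : POW k) : Type :=
  letI := r
  {f : Wrap k → R // IsEmb f} × {g : P → Wrap k // StrictMono g ∧ Surjective g}

abbrev E2 (P R : Type) [Preorder P] [Fintype R] [PartialOrder R] (k : ℕ) : Type :=
  Σ T : Finset R, ((Wrap k ≃ ↥T) × SurjSub P T)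

def grpFun (x : Σ r : POW k, EPair P R k r) : E2 P R k :=
  letI := x.1
  letI := Classical.decEq R
  let f := x.2.1
  let g := x.2.2
  let T : Finset R := univ.image f.1
  let b : Wrap k ≃ ↥T := Equiv.ofBijective
    (fun i => ⟨f.1 i, mem_image_of_mem _ (mem_univ i)⟩)
    ⟨fun i j hij => f.2.injective (congrArg Subtype.val hij),
     by rintro ⟨a, ha⟩
        obtain ⟨i, -, hi⟩ := mem_image.1 ha
        exact ⟨i, Subtype.ext hi⟩⟩
  ⟨T, b, ⟨fun p => b (g.1 p),
    fun p q hpq => Subtype.mk_lt_mk.2 ((f.2.lt_iff _ _).1 (g.2.1 hpq)),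
    b.surjective.comp g.2.2⟩⟩

def grpInv (x : E2 P R k) : Σ r : POW k, EPair P R k r :=
  let T := x.1
  let b := x.2.1
  let g' := x.2.2
  let r : POW k := PartialOrder.lift (fun i => ((b i : ↥T) : R))
    (fun i j hij => b.injective (Subtype.ext hij))
  ⟨r, ⟨fun i => ((b i : ↥T) : R), fun x y => Iff.rfl⟩,
      ⟨fun p => b.symm (g'.1 p),
        by intro p q hpq
           show ((b (b.symm (g'.1 p)) : ↥T) : R) < ((b (b.symm (g'.1 q)) : ↥T) : R)
           simpa [Equiv.apply_symm_apply] using Subtype.coe_lt_coe.2 (g'.2.1 hpq),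
        b.symm.surjective.comp g'.2.2⟩⟩

lemma E1_ext (x y : Σ r : POW k, EPair P R k r) (h1 : x.2.1.1 = y.2.1.1)
    (h2 : x.2.2.1 = y.2.2.1) : x = y := by
  obtain ⟨r, f, g⟩ := x
  obtain ⟨r', f', g'⟩ := y
  dsimp at h1 h2
  have hr : r = r' := by
    apply PartialOrder.ext
    intro a c
    have h3 : f.1 a ≤ f'.1 a → True := fun _ => trivial
    have h4 : (f.1 a ≤ f.1 c) ↔ (f'.1 a ≤ f'.1 c) := by rw [h1]
    exact (f.2 a c).trans (h4.trans (f'.2 a c).symm)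
  subst hr
  exact congrArg _ (Prod.ext (Subtype.ext h1) (Subtype.ext h2))

lemma E2_ext (x y : E2 P R k)
    (h1 : ∀ i, ((x.2.1 i : ↥x.1) : R) = ((y.2.1 i : ↥y.1) : R))
    (h2 : ∀ p, ((x.2.2.1 p : R)) = ((y.2.2.1 p : R))) : x = y := by
  obtain ⟨T, b, g⟩ := x
  obtain ⟨T', b', g'⟩ := y
  dsimp at h1 h2
  have hT : T = T' := by
    ext a
    constructor
    · intro ha
      obtain ⟨i, hi⟩ := b.surjective ⟨a, ha⟩
      have h5 := (h1 i).symm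
      rw [hi] at h5
      have h6 : ((b' i : ↥T') : R) ∈ T' := (b' i).2
      rw [h5] at h6
      exact h6
    · intro ha
      obtain ⟨i, hi⟩ := b'.surjective ⟨a, ha⟩
      have h5 := h1 i
      rw [hi] at h5
      have h6 : ((b i : ↥T) : R) ∈ T := (b i).2
      rw [h5] at h6
      exact h6
  subst hT
  exact congrArg _ (Prod.ext (Equiv.ext fun i => Subtype.ext (h1 i))
    (Subtype.ext (funext fun p => Subtype.ext (h2 p))))

def groupEquiv : (Σ r : POW k, EPair P R k r) ≃ E2 P R k where
  toFun := grpFun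
  invFun := grpInv
  left_inv x := E1_ext _ _ (funext fun i => rfl)
    (funext fun p => Equiv.symm_apply_apply _ _)
  right_inv x := E2_ext _ _ (fun i => rfl)
    (fun p => congrArg Subtype.val (x.2.1.apply_symm_apply (x.2.2.1 p)))

lemma nat_card_sigma {ι : Type} [Fintype ι] (α : ι → Type) [∀ i, Finite (α i)] :
    Nat.card (Σ i, α i) = ∑ i, Nat.card (α i) := by
  letI : ∀ i, Fintype (α i) := fun i => Fintype.ofFinite _
  rw [Nat.card_eq_fintype_card, Fintype.card_sigma]
  exact Finset.sum_congr rfl fun i _ => (Nat.card_eq_fintype_card).symm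

lemma group_count :
    (∑ r : POW k, embc' k r R * surjc' P k r)
      = ∑ T : Finset R, Nat.card (Wrap k ≃ ↥T) * surjc P ↥T := by
  have h1 : Nat.card (Σ r : POW k, EPair P R k r) = ∑ r : POW k, embc' k r R * surjc' P k r := by
    rw [nat_card_sigma]
    exact Finset.sum_congr rfl fun r _ => Nat.card_prod _ _
  have h2 : Nat.card (E2 P R k) = ∑ T : Finset R, Nat.card (Wrap k ≃ ↥T) * surjc P ↥T := by
    rw [nat_card_sigma]
    exact Finset.sum_congr rfl fun T _ => Nat.card_prod _ _
  rw [← h1, ← h2, Nat.card_congr (groupEquiv (P := P) (R := R) (k := k))]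

end Group

section Master

variable {P R : Type} [Fintype P] [PartialOrder P] [Fintype R] [PartialOrder R] {k : ℕ}

lemma fcard_wrap (k : ℕ) : Fintype.card (Wrap k) = k := Fintype.card_fin k

lemma nat_card_equiv_wrap (T : Finset R) :
    Nat.card (Wrap k ≃ ↥T) = if T.card = k then k.factorial else 0 := by
  letI := Classical.decEq R
  by_cases h : T.card = k
  · have e : Wrap k ≃ ↥T :=
      (Fintype.equivFinOfCardEq (by rw [Fintype.card_coe, h]) : ↥T ≃ Fin k).symm
    rw [Nat.card_eq_fintype_card, Fintype.card_equiv e, fcard_wrap, if_pos h]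
  · have : IsEmpty (Wrap k ≃ ↥T) := ⟨fun e => h (by rw [← Fintype.card_coe, ← fcard_wrap k, Fintype.card_congr e])⟩
    rw [Nat.card_of_isEmpty, if_neg h]

lemma master (N : ℕ) (hN : Fintype.card R ≤ N) :
    N.factorial * homc P R
      = ∑ k ∈ Finset.range (N+1), ∑ r : POW k,
          (N.factorial / k.factorial) * (embc' k r R * surjc' P k r) := by
  have step1 : ∀ k ∈ Finset.range (N+1),
      (∑ r : POW k, (N.factorial / k.factorial) * (embc' k r R * surjc' P k r))
        = ∑ T : Finset R, (N.factorial / k.factorial) * (Nat.card (Wrap k ≃ ↥T) * surjc P ↥T) := by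
    intro k _
    rw [← Finset.mul_sum, group_count (P := P) (R := R) (k := k), Finset.mul_sum]
  rw [Finset.sum_congr rfl step1, Finset.sum_comm]
  have step2 : ∀ T : Finset R,
      (∑ k ∈ Finset.range (N+1),
        (N.factorial / k.factorial) * (Nat.card (Wrap k ≃ ↥T) * surjc P ↥T))
        = N.factorial * surjc P ↥T := by
    intro T
    have hT : T.card ≤ N := le_trans (le_trans (Finset.card_le_univ T) (le_of_eq Finset.card_univ)) hN
    have hterm : ∀ k ∈ Finset.range (N+1),
        (N.factorial / k.factorial) * (Nat.card (Wrap k ≃ ↥T) * surjc P ↥T)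
          = if T.card = k then N.factorial * surjc P ↥T else 0 := by
      intro k hk
      rw [nat_card_equiv_wrap]
      split_ifs with hc
      · rw [← mul_assoc, mul_comm (N.factorial / k.factorial) k.factorial,
          Nat.mul_div_cancel' (Nat.factorial_dvd_factorial (Finset.mem_range_succ_iff.1 hk))]
      · rw [zero_mul, mul_zero]
    rw [Finset.sum_congr rfl hterm, Finset.sum_ite_eq,
      if_pos (Finset.mem_range_succ_iff.2 hT)]
  rw [Finset.sum_congr rfl (fun T _ => step2 T), ← Finset.mul_sum, homc_eq_sum_surjc]

end Master

section Inv

lemma isEmb_orderIso {A B : Type} [LE A] [LE B] (e : A ≃o B) : IsEmb (e : A → B) :=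
  fun x y => (e.le_iff_le).symm

lemma embc_congr_left {A A' B : Type} [Preorder A] [Preorder A'] [LE B] (e : A ≃o A') :
    embc A B = embc A' B := by
  apply Nat.card_congr
  refine ⟨fun f => ⟨f.1 ∘ e.symm, f.2.comp (isEmb_orderIso e.symm)⟩,
          fun g => ⟨g.1 ∘ e, g.2.comp (isEmb_orderIso e)⟩, ?_, ?_⟩
  · intro f
    apply Subtype.ext; funext x
    exact congrArg f.1 (e.symm_apply_apply x)
  · intro g
    apply Subtype.ext; funext x
    exact congrArg g.1 (e.apply_symm_apply x)

lemma surjc_congr_right {P A A' : Type} [Preorder P] [Preorder A] [Preorder A'] (e : A ≃o A') :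
    surjc P A = surjc P A' := by
  apply Nat.card_congr
  refine ⟨fun f => ⟨e ∘ f.1, (e.strictMono).comp f.2.1, e.surjective.comp f.2.2⟩,
          fun g => ⟨e.symm ∘ g.1, (e.symm.strictMono).comp g.2.1, e.symm.surjective.comp g.2.2⟩,
          ?_, ?_⟩
  · intro f
    apply Subtype.ext; funext x
    exact e.symm_apply_apply _
  · intro g
    apply Subtype.ext; funext x
    exact e.apply_symm_apply _

end Inv

section Meas

lemma relc_le_sq (A : Type) [Preorder A] [Finite A] : relc A ≤ (Nat.card A)^2 := by
  have h := Nat.card_le_card_of_injective (Subtype.val : {p : A × A // p.1 < p.2} → A × A)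
    Subtype.val_injective
  rw [Nat.card_prod] at h
  calc relc A ≤ Nat.card A * Nat.card A := h
  _ = (Nat.card A)^2 := (sq (Nat.card A)).symm

lemma cube_lemma {b a : ℕ} (h : b < a) : b^3 + b^2 < a^3 := by
  have h1 : b^3 + b^2 = b^2 * (b+1) := by ring
  have h2 : b^2 * (b+1) ≤ b^2 * a := Nat.mul_le_mul_left _ h
  have h3 : b^2 < a^2 := Nat.pow_lt_pow_left h (by norm_num)
  have h4 : b^2 * a < a^2 * a := Nat.mul_lt_mul_of_lt_of_le h3 le_rfl (Nat.pos_of_ne_zero (by omega))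
  have h5 : a^2 * a = a^3 := by ring
  omega

lemma meas_lt_or_iso {A B : Type} [Finite A] [PartialOrder A] [Finite B] [PartialOrder B]
    (f : A → B) (hsm : StrictMono f) (hs : Surjective f) :
    Nonempty (A ≃o B) ∨ meas B < meas A := by
  have hcard : Nat.card B ≤ Nat.card A := Nat.card_le_card_of_surjective f hs
  rcases lt_or_eq_of_le hcard with hlt | hceq
  · right
    have h1 : meas B ≤ (Nat.card B)^3 + (Nat.card B)^2 :=
      Nat.add_le_add_left (Nat.sub_le _ _) _
    have h2 : (Nat.card A)^3 ≤ meas A := Nat.le_add_right _ _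
    exact lt_of_le_of_lt h1 (lt_of_lt_of_le (cube_lemma hlt) h2)
  · -- equal cards: f is bijective
    have hbij : Function.Bijective f := by
      letI := Fintype.ofFinite A
      letI := Fintype.ofFinite B
      refine (Fintype.bijective_iff_surjective_and_card f).2 ⟨hs, ?_⟩
      rw [← Nat.card_eq_fintype_card, ← Nat.card_eq_fintype_card, hceq]
    -- compare relation counts via the induced map on strict pairs
    set φ : {p : A × A // p.1 < p.2} → {p : B × B // p.1 < p.2} :=
      fun p => ⟨(f p.1.1, f p.1.2), hsm p.2⟩ with hφdef
    have hφinj : Function.Injective φ := by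
      intro p q hpq
      apply Subtype.ext
      have h1 : f p.1.1 = f q.1.1 := congrArg (fun x => x.1.1) hpq
      have h2 : f p.1.2 = f q.1.2 := congrArg (fun x => x.1.2) hpq
      exact Prod.ext (hbij.1 h1) (hbij.1 h2)
    have hrel : relc A ≤ relc B := Nat.card_le_card_of_injective φ hφinj
    rcases lt_or_eq_of_le hrel with hrlt | hreq
    · right
      have hbB := relc_le_sq B
      have hbA := relc_le_sq A
      unfold meas
      rw [hceq] at hbB ⊢
      omega
    · -- equal relation counts: φ is surjective, so f reflects <, giving an iso
      left
      have hφbij : Function.Bijective φ :=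
        (Nat.bijective_iff_injective_and_card φ).2 ⟨hφinj, hreq⟩
      refine ⟨{ toEquiv := Equiv.ofBijective f hbij, map_rel_iff' := ?_ }⟩
      intro a b
      show f a ≤ f b ↔ a ≤ b
      constructor
      · intro hab
        rcases eq_or_lt_of_le hab with heq | hltb
        · exact (hbij.1 heq).le
        · obtain ⟨⟨⟨u, v⟩, huv⟩, he⟩ := hφbij.2 ⟨(f a, f b), hltb⟩
          have h1 : f u = f a := congrArg (fun x => x.1.1) he
          have h2 : f v = f b := congrArg (fun x => x.1.2) he
          have := huv
          rw [hbij.1 h1, hbij.1 h2] at this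
          exact this.le
      · intro hab
        rcases eq_or_lt_of_le hab with heq | hltb
        · exact (congrArg f heq).le
        · exact (hsm hltb).le
end Meas

section Key

variable {R S : Type} [Fintype R] [PartialOrder R] [Fintype S] [PartialOrder S]

lemma embc'_ne_zero_le {k : ℕ} (r : POW k) (B : Type) [Finite B] [PartialOrder B]
    (h : embc' k r B ≠ 0) : k ≤ Nat.card B := by
  obtain ⟨⟨⟨f, hf⟩⟩, -⟩ := Nat.card_ne_zero.1 h
  have hinj : Function.Injective f := @IsEmb.injective (Wrap k) B r _ f hf
  have := Nat.card_le_card_of_injective f hinj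
  rwa [card_wrap] at this

lemma embc'_congr_iso {k k' : ℕ} (r : POW k) (r' : POW k') (B : Type) [LE B]
    (e : @OrderIso (Wrap k) (Wrap k') r.toPreorder.toLE r'.toPreorder.toLE) :
    embc' k r B = embc' k' r' B :=
  @embc_congr_left (Wrap k) (Wrap k') B r.toPreorder r'.toPreorder _ e

def IsoP {k k' : ℕ} (r : POW k) (r' : POW k') : Prop :=
  Nonempty (@OrderIso (Wrap k') (Wrap k) r'.toPreorder.toLE r.toPreorder.toLE)

lemma surjc'_self_pos {k : ℕ} (r : POW k) :
    0 < @surjc (Wrap k) (Wrap k) r.toPreorder r.toPreorder := by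
  have : Nonempty {f : Wrap k → Wrap k //
      (@StrictMono _ _ r.toPreorder r.toPreorder f) ∧ Function.Surjective f} :=
    ⟨⟨id, fun _ _ hab => hab, Function.surjective_id⟩⟩
  exact Nat.card_pos

lemma key (h : ∀ (P : Type) [Fintype P] [PartialOrder P], homc P R = homc P S) :
    ∀ n k (r : POW k), meas' k r ≤ n → embc' k r R = embc' k r S := by
  intro n
  induction n using Nat.strong_induction_on with
  | _ n IH =>
  intro k r hn
  by_cases hk : Fintype.card R < k ∧ Fintype.card S < k
  · have hR0 : embc' k r R = 0 := by
      by_contra h0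
      have := embc'_ne_zero_le r R h0
      rw [Nat.card_eq_fintype_card] at this
      omega
    have hS0 : embc' k r S = 0 := by
      by_contra h0
      have := embc'_ne_zero_le r S h0
      rw [Nat.card_eq_fintype_card] at this
      omega
    rw [hR0, hS0]
  · letI := r
    letI : ∀ (k' : ℕ) (r' : POW k'), Decidable (IsoP r r') := fun _ _ => Classical.propDecidable _
    set N := max (Fintype.card R) (Fintype.card S) with hNdef
    have hkN : k ≤ N := by
      rcases not_and_or.1 hk with h1 | h1
      · exact le_trans (Nat.le_of_not_lt h1) (le_max_left _ _)
      · exact le_trans (Nat.le_of_not_lt h1) (le_max_right _ _)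
    have hQ : homc (Wrap k) R = homc (Wrap k) S := h (Wrap k)
    have hRm := master (P := Wrap k) (R := R) N (le_max_left _ _)
    have hSm := master (P := Wrap k) (R := S) N (le_max_right _ _)
    have heq : N.factorial * homc (Wrap k) R = N.factorial * homc (Wrap k) S := by rw [hQ]
    rw [hRm, hSm] at heq
    have splitgen : ∀ (B : Type) [Fintype B] [PartialOrder B], ∀ k' : ℕ,
        (∑ r' : POW k', (N.factorial / k'.factorial) * (embc' k' r' B * surjc' (Wrap k) k' r'))
          = embc' k r B *
              (∑ r' ∈ Finset.univ.filter (fun r' : POW k' => IsoP r r'),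
                (N.factorial / k'.factorial) * surjc' (Wrap k) k' r')
            + ∑ r' ∈ Finset.univ.filter (fun r' : POW k' => ¬ IsoP r r'),
                (N.factorial / k'.factorial) * (embc' k' r' B * surjc' (Wrap k) k' r') := by
      intro B _ _ k'
      rw [← Finset.sum_filter_add_sum_filter_not Finset.univ (fun r' : POW k' => IsoP r r')]
      congr 1
      rw [Finset.mul_sum]
      apply Finset.sum_congr rfl
      intro r' hr'
      obtain ⟨e⟩ := (Finset.mem_filter.1 hr').2
      rw [(embc'_congr_iso r' r B e).symm]
      ring
    have hX : (∑ k' ∈ Finset.range (N+1),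
          ∑ r' ∈ Finset.univ.filter (fun r' : POW k' => ¬ IsoP r r'),
            (N.factorial / k'.factorial) * (embc' k' r' R * surjc' (Wrap k) k' r'))
        = ∑ k' ∈ Finset.range (N+1),
          ∑ r' ∈ Finset.univ.filter (fun r' : POW k' => ¬ IsoP r r'),
            (N.factorial / k'.factorial) * (embc' k' r' S * surjc' (Wrap k) k' r') := by
      apply Finset.sum_congr rfl
      intro k' _
      apply Finset.sum_congr rfl
      intro r' hr'
      have hni := (Finset.mem_filter.1 hr').2
      by_cases hs0 : surjc' (Wrap k) k' r' = 0
      · rw [hs0, mul_zero, mul_zero, mul_zero, mul_zero]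
      · obtain ⟨⟨f, hsm, hsurj⟩, -⟩ := Nat.card_ne_zero.1 hs0
        rcases @meas_lt_or_iso (Wrap k) (Wrap k') _ r _ r' f hsm hsurj with hiso | hlt
        · obtain ⟨e⟩ := hiso
          exact absurd (⟨e.symm⟩ : IsoP r r') hni
        · rw [IH (meas' k' r') (lt_of_lt_of_le hlt hn) k' r' le_rfl]
    have heq2 := ((Finset.sum_congr rfl (fun k' _ => splitgen R k')).symm.trans heq).trans
      (Finset.sum_congr rfl (fun k' _ => splitgen S k'))
    rw [Finset.sum_add_distrib, Finset.sum_add_distrib, ← Finset.mul_sum, ← Finset.mul_sum,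
        hX] at heq2
    have haW := Nat.add_right_cancel heq2
    have hW : 0 < ∑ k' ∈ Finset.range (N+1),
        ∑ r' ∈ Finset.univ.filter (fun r' : POW k' => IsoP r r'),
          (N.factorial / k'.factorial) * surjc' (Wrap k) k' r' := by
      apply Finset.sum_pos'
      · intro i _; exact Nat.zero_le _
      · refine ⟨k, Finset.mem_range_succ_iff.2 hkN, ?_⟩
        apply Finset.sum_pos'
        · intro i _; exact Nat.zero_le _
        · refine ⟨r, Finset.mem_filter.2 ⟨Finset.mem_univ r,
            ⟨@OrderIso.refl (Wrap k) r.toPreorder.toLE⟩⟩, ?_⟩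
          apply Nat.mul_pos
          · exact Nat.div_pos (Nat.factorial_le (by exact hkN)) (Nat.factorial_pos k)
          · exact surjc'_self_pos r
    exact Nat.eq_of_mul_eq_mul_right hW haW

end Key

lemma exists_emb {R S : Type} [Fintype R] [PartialOrder R] [Fintype S] [PartialOrder S]
    (h : ∀ (P : Type) [Fintype P] [PartialOrder P], homc P R = homc P S) :
    ∃ φ : R → S, IsEmb φ := by
  set n := Fintype.card R with hn
  let bR : Wrap n ≃ R := (show Wrap n ≃ R from (Fintype.equivFin R).symm)
  let r0 : POW n := PartialOrder.lift (fun i => bR i) bR.injective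
  have hkey := key h (meas' n r0) n r0 le_rfl
  have hne : embc' n r0 R ≠ 0 := by
    apply Nat.card_ne_zero.2
    refine ⟨⟨⟨fun i => bR i, fun x y => Iff.rfl⟩⟩, ?_⟩
    infer_instance
  rw [hkey] at hne
  obtain ⟨⟨⟨f, hf⟩⟩, -⟩ := Nat.card_ne_zero.1 hne
  refine ⟨f ∘ bR.symm, ?_⟩
  intro x y
  have h1 := hf (bR.symm x) (bR.symm y)
  have h2 : (x ≤ y) ↔ @LE.le (Wrap n) r0.toPreorder.toLE (bR.symm x) (bR.symm y) := by
    show x ≤ y ↔ (bR (bR.symm x) ≤ bR (bR.symm y))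
    rw [bR.apply_symm_apply, bR.apply_symm_apply]
  exact h2.trans h1

end Stmt12

theorem stmt_12 {R S : Type} [Fintype R] [PartialOrder R] [Fintype S] [PartialOrder S]
    (h : ∀ (P : Type) [Fintype P] [PartialOrder P],
      Nat.card {f : P → R // StrictMono f} = Nat.card {f : P → S // StrictMono f}) :
    Nonempty (R ≃o S) := by
  obtain ⟨φ, hφ⟩ := Stmt12.exists_emb (R := R) (S := S) (fun P _ _ => h P)
  obtain ⟨ψ, hψ⟩ := Stmt12.exists_emb (R := S) (S := R) (fun P _ _ => (h P).symm)
  have hφinj : Function.Injective φ := Stmt12.IsEmb.injective hφ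
  have hψinj : Function.Injective ψ := Stmt12.IsEmb.injective hψ
  have hcard : Fintype.card R = Fintype.card S :=
    le_antisymm (Fintype.card_le_of_injective φ hφinj) (Fintype.card_le_of_injective ψ hψinj)
  have hbij : Function.Bijective φ :=
    (Fintype.bijective_iff_injective_and_card φ).2 ⟨hφinj, hcard⟩
  exact ⟨{ toEquiv := Equiv.ofBijective φ hbij, map_rel_iff' := fun {a b} => (hφ a b).symm }⟩
end
end

section
/- Let P, Q be finite posets and ξ : P → Q a strict order homomorphism. Then the map α_ξ : P → E(Q), x ↦ (ξ(x), ξ({y : y < x}), ξ({y : x < y})), is a strict homomorphism into the EV-system E(Q) equipped with the relation ≤_+. -/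
/-- Membership condition for the EV-system. -/
def EVMem {α : Type*} [PartialOrder α] (a : α × Set α × Set α) : Prop :=
  a.2.1 ⊆ {y | y < a.1} ∧ a.2.2 ⊆ {y | a.1 < y}

/-- The relation `<₊` on triples: `a <₊ b` iff `a₁ ∈ b₂` and `b₁ ∈ a₃`. -/
def ltPlusRaw {α : Type*} (a b : α × Set α × Set α) : Prop :=
  a.1 ∈ b.2.1 ∧ b.1 ∈ a.2.2

/-- The triple `α_ξ(x) = (ξ(x), ξ(↓° x), ξ(↑° x))`. -/
def alphaTriple {P T : Type*} [PartialOrder P] (ξ : P → T) (x : P) :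
    T × Set T × Set T :=
  (ξ x, ξ '' {y | y < x}, ξ '' {y | x < y})

theorem stmt_17 {P Q : Type} [Fintype P] [PartialOrder P] [Fintype Q] [PartialOrder Q]
    (ξ : P → Q) (hξ : StrictMono ξ) :
    -- `α_ξ` takes values in `E(Q)`
    (∀ x : P, EVMem (alphaTriple ξ x)) ∧
    -- `α_ξ` is a homomorphism into `(E(Q), ≤₊)`
    (∀ x y : P, x ≤ y →
      ltPlusRaw (alphaTriple ξ x) (alphaTriple ξ y) ∨
        alphaTriple ξ x = alphaTriple ξ y) ∧
    -- and it is strict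
    (∀ x y : P, x ≤ y → x ≠ y → alphaTriple ξ x ≠ alphaTriple ξ y) := by
  refine ⟨?_, ?_, ?_⟩
  · intro x
    constructor
    · rintro _ ⟨y, hy, rfl⟩; exact hξ hy
    · rintro _ ⟨y, hy, rfl⟩; exact hξ hy
  · intro x y hxy
    rcases eq_or_lt_of_le hxy with rfl | h
    · exact Or.inr rfl
    · exact Or.inl ⟨⟨x, h, rfl⟩, ⟨y, h, rfl⟩⟩
  · intro x y hxy hne heq
    have h := lt_of_le_of_ne hxy hne
    have : ξ x = ξ y := congrArg Prod.fst heq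
    exact absurd this (ne_of_lt (hξ h))
end

section
/- Let P, Q be disjoint finite posets, A a convex subset of P, B a convex subset of Q, and β : P|_A → Q|_B an order isomorphism. Define on V = (P \ A) ∪ Q the relation ≤_T as the union of ≤_P restricted to P\A, ≤_Q, the set of pairs (y,w) with y ∈ Q, w ∈ P\A such that there is a ∈ A with a ≤_P w and y ≤_Q β(a), and the set of pairs (w,y) with w ∈ P\A, y ∈ Q such that there is a ∈ A with w ≤_P a and β(a) ≤_Q y. Then ≤_T is a partial order on V. -/
/-- A subset `A` of a poset is convex. -/
def IsConvexSet {α : Type*} [PartialOrder α] (A : Set α) : Prop :=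
  ∀ x ∈ A, ∀ y ∈ A, ∀ z, x ≤ z → z ≤ y → z ∈ A

/-- The relation `≤_T` on `V = (P \ A) ⊕ Q` built from the orders of `P` and `Q`
and the isomorphism `β : P|_A ≃o Q|_B`. -/
def leT {P Q : Type*} [PartialOrder P] [PartialOrder Q]
    (A : Set P) (B : Set Q) (β : A ≃o B) :
    ({x : P // x ∉ A} ⊕ Q) → ({x : P // x ∉ A} ⊕ Q) → Prop
  | Sum.inl w, Sum.inl w' => (w : P) ≤ (w' : P)
  | Sum.inr y, Sum.inr y' => y ≤ y'
  | Sum.inr y, Sum.inl w => ∃ a : A, (a : P) ≤ (w : P) ∧ y ≤ (β a : Q)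
  | Sum.inl w, Sum.inr y => ∃ a : A, (w : P) ≤ (a : P) ∧ (β a : Q) ≤ y

theorem stmt_18 {P Q : Type} [Fintype P] [PartialOrder P] [Fintype Q] [PartialOrder Q]
    (A : Set P) (B : Set Q) (hA : IsConvexSet A) (hB : IsConvexSet B) (β : A ≃o B) :
    Reflexive (leT A B β) ∧
    (∀ v w, leT A B β v w → leT A B β w v → v = w) ∧
    (∀ u v w, leT A B β u v → leT A B β v w → leT A B β u w) := by
  refine ⟨?_, ?_, ?_⟩
  · intro v; cases v <;> simp [leT]
  · intro v w hvw hwv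
    cases v with
    | inl w1 =>
      cases w with
      | inl w2 =>
        simp only [leT] at hvw hwv
        exact congrArg Sum.inl (Subtype.ext (le_antisymm hvw hwv))
      | inr y =>
        obtain ⟨a, haw, hay⟩ := hvw
        obtain ⟨a', ha'w, hya'⟩ := hwv
        exact absurd (hA a' a'.2 a a.2 w1 ha'w haw) w1.2
    | inr y =>
      cases w with
      | inl w2 =>
        obtain ⟨a, haw, hya⟩ := hvw
        obtain ⟨a', ha'w, ha'y⟩ := hwv
        exact absurd (hA a a.2 a' a'.2 w2 haw ha'w) w2.2
      | inr y' =>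
        simp only [leT] at hvw hwv
        exact congrArg Sum.inr (le_antisymm hvw hwv)
  · intro u v w huv hvw
    cases u with
    | inl w1 =>
      cases v with
      | inl w2 =>
        cases w with
        | inl w3 => exact le_trans huv hvw
        | inr y =>
          obtain ⟨a, h1, h2⟩ := hvw
          exact ⟨a, le_trans huv h1, h2⟩
      | inr y =>
        obtain ⟨a, h1, h2⟩ := huv
        cases w with
        | inl w3 =>
          obtain ⟨a', h3, h4⟩ := hvw
          have : (a : P) ≤ (a' : P) := by
            have : β a ≤ β a' := Subtype.coe_le_coe.mp (le_trans h2 h4)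
            exact Subtype.coe_le_coe.mpr (β.le_iff_le.mp this)
          exact le_trans h1 (le_trans this h3)
        | inr y' => exact ⟨a, h1, le_trans h2 hvw⟩
    | inr y =>
      cases v with
      | inl w2 =>
        obtain ⟨a, h1, h2⟩ := huv
        cases w with
        | inl w3 => exact ⟨a, le_trans h1 hvw, h2⟩
        | inr y' =>
          obtain ⟨a', h3, h4⟩ := hvw
          have : β a ≤ β a' := β.le_iff_le.mpr (Subtype.coe_le_coe.mp (le_trans h1 h3))
          exact le_trans h2 (le_trans (Subtype.coe_le_coe.mpr this) h4)
      | inr y' =>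
        cases w with
        | inl w3 =>
          obtain ⟨a, h1, h2⟩ := hvw
          exact ⟨a, h1, le_trans huv h2⟩
        | inr y'' => exact le_trans huv hvw
end
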